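/- Suppose (P) is continuous, every constraint function g_t is continuously differentiable on a neighborhood of x̂ ∈ S, and the Mangasarian–Fromovitz constraint qualification (MFCQ) holds at x̂. Then x̂ is an isolated efficient solution of (P) if and only if there exists ν > 0 such that for every w ∈ ℝ^n with ‖w‖ ≤ ν there exist ξ = (ξ_1, …, ξ_p) with ξ_i ∈ ∂f_i(x̂) for each i and λ in the unit simplex such that ϑ(x̂, (ξ_1 − w, …, ξ_p − w), λ) = 0. -/

import Mathlib

open Set Filter Topology
open scoped RealInnerProductSpace Pointwise

noncomputable section

namespace MOSIP

variable {n : ℕ} {T : Type*} {p : ℕ}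

/-- The decision space `ℝ^n`. -/
abbrev Eucl (n : ℕ) := EuclideanSpace ℝ (Fin n)

/-- Subdifferential of a real-valued function. -/
def subdiff (h : Eucl n → ℝ) (x : Eucl n) : Set (Eucl n) :=
  {ξ | ∀ y, h x + ⟪ξ, y - x⟫ ≤ h y}

/-- Subdifferential of an extended-real-valued function. -/
def subdiffE (h : Eucl n → EReal) (x : Eucl n) : Set (Eucl n) :=
  {ξ | ∀ y, h x + ((⟪ξ, y - x⟫ : ℝ) : EReal) ≤ h y}

/-- Convexity of an extended-real-valued function. -/
def ConvexE (h : Eucl n → EReal) : Prop :=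
  ∀ x y : Eucl n, ∀ a b : ℝ, 0 ≤ a → 0 ≤ b → a + b = 1 →
    h (a • x + b • y) ≤ (a : EReal) * h x + (b : EReal) * h y

/-- Proper (with values in `ℝ ∪ {+∞}`): never `−∞` and not identically `+∞`. -/
def ProperE (h : Eucl n → EReal) : Prop :=
  (∀ x, h x ≠ ⊥) ∧ (∃ x, h x ≠ ⊤)

/-- Feasible set `S` of the problem `(P)`. -/
def feasSet (g : T → Eucl n → EReal) : Set (Eucl n) := {x | ∀ t, g t x ≤ 0}

/-- Active indices `T(x)`. -/
def activeIx (g : T → Eucl n → EReal) (x : Eucl n) : Set T := {t | g t x = 0}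

/-- `ε`-active indices `T_ε(x)`. -/
def activeIxEps (g : T → Eucl n → EReal) (x : Eucl n) (ε : ℝ) : Set T :=
  {t | ((-ε : ℝ) : EReal) ≤ g t x}

/-- `F(xh) = ⋃ i, ∂f_i(xh)`. -/
def FSet (f : Fin p → Eucl n → ℝ) (x : Eucl n) : Set (Eucl n) := ⋃ i, subdiff (f i) x

/-- `G(xh) = ⋃_{t ∈ T(xh)} ∂g_t(xh)`. -/
def GSet (g : T → Eucl n → EReal) (x : Eucl n) : Set (Eucl n) :=
  ⋃ t ∈ activeIx g x, subdiffE (g t) x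

/-- The smallest convex cone containing `M` and `0`: all finite nonnegative combinations. -/
def coneHull (M : Set (Eucl n)) : Set (Eucl n) :=
  {x | ∃ (s : Finset (Eucl n)) (c : Eucl n → ℝ), ↑s ⊆ M ∧ (∀ v ∈ s, 0 ≤ c v) ∧
    x = ∑ v ∈ s, c v • v}

/-- Negative polar cone `M⁰`. -/
def negPolar (M : Set (Eucl n)) : Set (Eucl n) := {d | ∀ ξ ∈ M, ⟪ξ, d⟫ ≤ 0}

/-- Strictly negative polar cone `M⁻`. -/
def strictNegPolar (M : Set (Eucl n)) : Set (Eucl n) := {d | ∀ ξ ∈ M, ⟪ξ, d⟫ < 0}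

/-- Contingent (Bouligand tangent) cone of `M` at `x`. -/
def contingentCone (M : Set (Eucl n)) (x : Eucl n) : Set (Eucl n) :=
  {v | ∃ (τ : ℕ → ℝ) (w : ℕ → Eucl n), (∀ r, 0 < τ r) ∧ Tendsto τ atTop (𝓝 0) ∧
    Tendsto w atTop (𝓝 v) ∧ ∀ r, x + τ r • w r ∈ M}

/-- Normal cone `N(M, x) := C(M, x)⁰`. -/
def normalCone (M : Set (Eucl n)) (x : Eucl n) : Set (Eucl n) :=
  negPolar (contingentCone M x)

/-- Weak efficient solution. -/
def WeakEff (f : Fin p → Eucl n → ℝ) (S : Set (Eucl n)) (xh : Eucl n) : Prop :=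
  ¬ ∃ x ∈ S, ∀ i, f i x < f i xh

/-- Efficient solution. -/
def Eff (f : Fin p → Eucl n → ℝ) (S : Set (Eucl n)) (xh : Eucl n) : Prop :=
  ¬ ∃ x ∈ S, (∀ i, f i x ≤ f i xh) ∧ ∃ j, f j x < f j xh

/-- Isolated efficient solution with constant `ν`:
`max_i (f_i(x) − f_i(xh)) ≥ ν‖x − xh‖` on `S`. -/
def IsolatedEff (f : Fin p → Eucl n → ℝ) (S : Set (Eucl n)) (xh : Eucl n) (ν : ℝ) : Prop :=
  ∀ x ∈ S, ∃ i, ν * ‖x - xh‖ ≤ f i x - f i xh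

/-- `w ∈ Σ α_i ∂f_i(xh) + Σ_{t ∈ T*} β_t ∂g_t(xh)` with multipliers as described,
where `Nonneg`/`Pos` refers to the sign condition on the `α_i`. -/
def KKTPoint (f : Fin p → Eucl n → ℝ) (g : T → Eucl n → EReal) (xh : Eucl n)
    (w : Eucl n) : Prop :=
  ∃ (α : Fin p → ℝ) (Ts : Finset T) (β : T → ℝ) (ξ : Fin p → Eucl n) (ζ : T → Eucl n),
    (∀ i, 0 ≤ α i) ∧ ∑ i, α i = 1 ∧ (∀ t ∈ Ts, t ∈ activeIx g xh) ∧
    (∀ t ∈ Ts, 0 ≤ β t) ∧ (∀ i, ξ i ∈ subdiff (f i) xh) ∧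
    (∀ t ∈ Ts, ζ t ∈ subdiffE (g t) xh) ∧
    ∑ i, α i • ξ i + ∑ t ∈ Ts, β t • ζ t = w

/-- The weak KKT condition at `xh`. -/
def WeakKKT (f : Fin p → Eucl n → ℝ) (g : T → Eucl n → EReal) (xh : Eucl n) : Prop :=
  KKTPoint f g xh 0

/-- The strong KKT condition at `xh` (all objective multipliers positive). -/
def StrongKKT (f : Fin p → Eucl n → ℝ) (g : T → Eucl n → EReal) (xh : Eucl n) : Prop :=
  ∃ (α : Fin p → ℝ) (Ts : Finset T) (β : T → ℝ) (ξ : Fin p → Eucl n) (ζ : T → Eucl n),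
    (∀ i, 0 < α i) ∧ ∑ i, α i = 1 ∧ (∀ t ∈ Ts, t ∈ activeIx g xh) ∧
    (∀ t ∈ Ts, 0 ≤ β t) ∧ (∀ i, ξ i ∈ subdiff (f i) xh) ∧
    (∀ t ∈ Ts, ζ t ∈ subdiffE (g t) xh) ∧
    ∑ i, α i • ξ i + ∑ t ∈ Ts, β t • ζ t = 0

/-- The perturbed KKT condition at `xh` with constant `ν`. -/
def PerturbedKKT (f : Fin p → Eucl n → ℝ) (g : T → Eucl n → EReal) (xh : Eucl n)
    (ν : ℝ) : Prop :=
  ∀ w : Eucl n, ‖w‖ ≤ ν → KKTPoint f g xh w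

/-- The gap function `ϑ(x, ξ, λ) = sup_{y ∈ S} Σ_i λ_i ⟪ξ_i, x − y⟫`. -/
def gapFn (S : Set (Eucl n)) (x : Eucl n) (ξ : Fin p → Eucl n) (lam : Fin p → ℝ) : EReal :=
  ⨆ y ∈ S, ((∑ i, lam i * ⟪ξ i, x - y⟫ : ℝ) : EReal)

/-- The unit simplex of multipliers. -/
def simplex (lam : Fin p → ℝ) : Prop := (∀ i, 0 ≤ lam i) ∧ ∑ i, lam i = 1

/-- Supremum (marginal) function `ψ(x) = sup_t g_t(x)`. -/
def supFn (g : T → Eucl n → EReal) (x : Eucl n) : EReal := ⨆ t, g t x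

/-- Directional derivative of a convex extended-real-valued function,
`h'(x; d) = inf_{τ > 0} (h(x + τ d) − h(x))/τ` (the limit as `τ ↓ 0`). -/
def dirDeriv (h : Eucl n → EReal) (x d : Eucl n) : EReal :=
  ⨅ τ ∈ Ioi (0 : ℝ), (h (x + τ • d) - h x) * ((τ⁻¹ : ℝ) : EReal)

/-- Every constraint is (real-valued and) continuously differentiable around `xh`,
with gradient `gr t` at `xh`. -/
def SmoothConstraintsAt (g : T → Eucl n → EReal) (gr : T → Eucl n) (xh : Eucl n) : Prop :=
  ∀ t, ∃ (h : Eucl n → ℝ) (U : Set (Eucl n)), U ∈ 𝓝 xh ∧ (∀ y ∈ U, g t y = (h y : EReal)) ∧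
    ContDiffOn ℝ 1 h U ∧ gradient h xh = gr t

/-- Slater CQ. -/
def SCQ (g : T → Eucl n → EReal) : Prop := ∃ x₀ : Eucl n, ∀ t, g t x₀ < 0

/-- Mangasarian–Fromovitz CQ at `xh`. -/
def MFCQ (g : T → Eucl n → EReal) (xh : Eucl n) : Prop :=
  (GSet g xh).Nonempty ∧ (strictNegPolar (GSet g xh)).Nonempty

/-- Perturbed Mangasarian–Fromovitz CQ at `xh`. -/
def PMFCQ (g : T → Eucl n → EReal) (xh : Eucl n) : Prop :=
  ∃ xs : Eucl n,
    (⨅ ε ∈ Ioi (0 : ℝ), ⨆ ξ ∈ ⋃ t ∈ activeIxEps g xh ε, subdiffE (g t) xh,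
      ((⟪ξ, xs⟫ : ℝ) : EReal)) < 0

/-- Local Farkas–Minkowski CQ at `xh`. -/
def LFMCQ (g : T → Eucl n → EReal) (xh : Eucl n) : Prop :=
  normalCone (feasSet g) xh = coneHull (GSet g xh)

/-- Closed cone CQ at `xh`. -/
def CCCQ (g : T → Eucl n → EReal) (xh : Eucl n) : Prop :=
  IsClosed (coneHull (GSet g xh))

/-- Abadie CQ at `xh`. -/
def ACQ (g : T → Eucl n → EReal) (xh : Eucl n) : Prop :=
  (GSet g xh).Nonempty ∧ negPolar (GSet g xh) ⊆ contingentCone (feasSet g) xh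

/-- Kuhn–Tucker CQ at `xh`. -/
def KTCQ (g : T → Eucl n → EReal) (xh : Eucl n) : Prop :=
  {d | dirDeriv (supFn g) xh d ≤ 0} ⊆ contingentCone (feasSet g) xh

/-- Pshenichnyi–Levin–Valadier CQ at `xh`. -/
def PLVCQ (g : T → Eucl n → EReal) (xh : Eucl n) : Prop :=
  subdiffE (supFn g) xh ⊆ coneHull (GSet g xh)

/-- Weak Abadie DQ at `xh`. -/
def WADQ (f : Fin p → Eucl n → ℝ) (g : T → Eucl n → EReal) (xh : Eucl n) : Prop :=
  (GSet g xh).Nonempty ∧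
    strictNegPolar (FSet f xh) ∩ negPolar (GSet g xh) ⊆ contingentCone (feasSet g) xh

/-- The sublevel sets `Q^i(xh)`. -/
def QSet (f : Fin p → Eucl n → ℝ) (S : Set (Eucl n)) (xh : Eucl n) (i : Fin p) :
    Set (Eucl n) :=
  {x ∈ S | ∀ l, l ≠ i → f l x ≤ f l xh}

/-- Extended Abadie DQ at `xh`. -/
def EADQ (f : Fin p → Eucl n → ℝ) (g : T → Eucl n → EReal) (xh : Eucl n) : Prop :=
  (GSet g xh).Nonempty ∧
    negPolar (FSet f xh) ∩ negPolar (GSet g xh) ⊆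
      ⋂ i, contingentCone (QSet f (feasSet g) xh i) xh

/-- Maeda objective qualification at `xh`. -/
def MOQ (f : Fin p → Eucl n → ℝ) (xh : Eucl n) : Prop :=
  negPolar (FSet f xh) ⊆ {0} ∪ ⋃ i, strictNegPolar (subdiff (f i) xh)


/-!
If `x̂` is isolated with constant `ν` and `‖w‖ ≤ ν`, then along every feasible direction
`d = y - x̂` some objective has one-sided derivative `f_i'(x̂; d) ≥ ν‖d‖ ≥ ⟪w, d⟫`, so by the max
formula some `ξ` in the compact convex set `D` of simplex combinations of the `∂f_i(x̂)` has
`⟪ξ - w, d⟫ ≥ 0`. A minimax argument turns "for every `d` some `ξ ∈ D`" into "one `ξ ∈ D` for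
every `d`", which is the vanishing of the gap function. Conversely, testing the gap condition with
`w = ν (x - x̂) / ‖x - x̂‖` and using the subgradient inequalities gives
`Σ λ_i (f_i(x) - f_i(x̂)) ≥ ν‖x - x̂‖`.
-/

section LineDeriv

variable {E : Type*} [AddCommGroup E] [Module ℝ E] {f : E → ℝ}

def dirSlope (f : E → ℝ) (x v : E) (τ : ℝ) : ℝ := (f (x + τ • v) - f x) / τ

/-- For convex `f` the slope `dirSlope f x v τ` decreases as `τ ↓ 0`, so this infimum is the
one-sided derivative of `f` at `x` in the direction `v`. -/
def rightLineDeriv (f : E → ℝ) (x v : E) : ℝ :=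
  ⨅ τ : Ioi (0 : ℝ), dirSlope f x v τ

lemma _root_.ConvexOn.comp_line (hf : ConvexOn ℝ univ f) (x v : E) :
    ConvexOn ℝ univ fun t : ℝ => f (x + t • v) := by
  refine ⟨convex_univ, fun s _ t _ a b ha hb hab => ?_⟩
  have hcomb : a • (x + s • v) + b • (x + t • v) = x + (a • s + b • t) • v := by
    linear_combination (norm := module) hab • x
  simpa only [hcomb] using hf.2 (mem_univ (x + s • v)) (mem_univ (x + t • v)) ha hb hab

lemma _root_.ConvexOn.dirSlope_mono (hf : ConvexOn ℝ univ f) (x v : E) {τ τ' : ℝ} (hτ : 0 < τ)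
    (h : τ ≤ τ') : dirSlope f x v τ ≤ dirSlope f x v τ' := by
  simpa [dirSlope] using (hf.comp_line x v).secant_mono (a := 0) (mem_univ _) (mem_univ _)
    (mem_univ _) hτ.ne' (hτ.trans_le h).ne' h

lemma _root_.ConvexOn.bddBelow_dirSlope (hf : ConvexOn ℝ univ f) (x v : E) :
    BddBelow (range fun τ : Ioi (0 : ℝ) => dirSlope f x v τ) := by
  refine ⟨f x - f (x - v), ?_⟩
  rintro _ ⟨⟨τ, hτ⟩, rfl⟩
  have h := (hf.comp_line x v).slope_mono_adjacent (x := -1) (y := 0) (z := τ)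
    (mem_univ _) (mem_univ _) (by norm_num) hτ
  simp only [neg_smul, one_smul, zero_smul, add_zero, ← sub_eq_add_neg] at h
  simpa [dirSlope] using h

lemma _root_.ConvexOn.rightLineDeriv_le (hf : ConvexOn ℝ univ f) (x v : E) {τ : ℝ} (hτ : 0 < τ) :
    rightLineDeriv f x v ≤ dirSlope f x v τ :=
  ciInf_le (hf.bddBelow_dirSlope x v) ⟨τ, hτ⟩

lemma le_rightLineDeriv {x v : E} {c : ℝ} (h : ∀ τ > 0, c ≤ dirSlope f x v τ) :
    c ≤ rightLineDeriv f x v :=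
  le_ciInf fun τ => h τ τ.2

lemma rightLineDeriv_zero (x : E) : rightLineDeriv f x 0 = 0 := by
  simp [rightLineDeriv, dirSlope]

lemma _root_.ConvexOn.rightLineDeriv_smul (hf : ConvexOn ℝ univ f) (x v : E) {c : ℝ} (hc : 0 < c) :
    rightLineDeriv f x (c • v) = c * rightLineDeriv f x v := by
  have hslope : ∀ τ : ℝ, dirSlope f x (c • v) τ = c * dirSlope f x v (τ * c) := by
    intro τ
    rw [dirSlope, dirSlope, smul_smul, mul_div_assoc', mul_comm τ c, ← div_div,
      mul_div_cancel_left₀ _ hc.ne']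
  apply le_antisymm
  · refine (div_le_iff₀' hc).1 (le_rightLineDeriv fun σ hσ => (div_le_iff₀' hc).2 ?_)
    simpa [hslope, div_mul_cancel₀ σ hc.ne'] using
      hf.rightLineDeriv_le x (c • v) (div_pos hσ hc)
  · refine le_rightLineDeriv fun τ hτ => ?_
    rw [hslope]
    exact mul_le_mul_of_nonneg_left (hf.rightLineDeriv_le x v (by positivity)) hc.le

lemma _root_.ConvexOn.rightLineDeriv_add_le (hf : ConvexOn ℝ univ f) (x u v : E) :
    rightLineDeriv f x (u + v) ≤ rightLineDeriv f x u + rightLineDeriv f x v := by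
  have hmid : ∀ τ > 0, rightLineDeriv f x (u + v) ≤ dirSlope f x u τ + dirSlope f x v τ := by
    intro τ hτ
    have hconv := hf.2 (mem_univ (x + τ • u)) (mem_univ (x + τ • v))
      (by norm_num : (0 : ℝ) ≤ 1 / 2) (by norm_num : (0 : ℝ) ≤ 1 / 2) (by norm_num)
    rw [show (1 / 2 : ℝ) • (x + τ • u) + (1 / 2 : ℝ) • (x + τ • v) = x + (τ / 2) • (u + v) by
      module, smul_eq_mul, smul_eq_mul] at hconv
    refine (hf.rightLineDeriv_le x (u + v) (half_pos hτ)).trans ?_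
    rw [dirSlope, dirSlope, dirSlope, ← add_div, div_le_div_iff₀ (half_pos hτ) hτ]
    nlinarith
  have hu : ∀ σ > 0, rightLineDeriv f x (u + v) - dirSlope f x v σ ≤ rightLineDeriv f x u :=
    fun σ hσ => le_rightLineDeriv fun τ hτ => by
      have := hmid (min τ σ) (lt_min hτ hσ)
      have := hf.dirSlope_mono x u (lt_min hτ hσ) (min_le_left τ σ)
      have := hf.dirSlope_mono x v (lt_min hτ hσ) (min_le_right τ σ)
      linarith
  have hv : rightLineDeriv f x (u + v) - rightLineDeriv f x u ≤ rightLineDeriv f x v :=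
    le_rightLineDeriv fun σ hσ => by linarith [hu σ hσ]
  linarith

end LineDeriv

section Subdifferential

variable {n : ℕ} {f : Eucl n → ℝ}

/-- The max formula, obtained by Hahn–Banach from the sublinear function `rightLineDeriv f x`. -/
theorem exists_mem_subdiff_rightLineDeriv_le (hf : ConvexOn ℝ univ f) (x d : Eucl n) :
    ∃ ξ ∈ subdiff f x, rightLineDeriv f x d ≤ ⟪ξ, d⟫ := by
  have hH : ∀ c : ℝ, c • d = 0 → c • rightLineDeriv f x d = 0 := by
    intro c hc
    rcases smul_eq_zero.1 hc with rfl | rfl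
    · simp
    · simp [rightLineDeriv_zero]
  have hNd : ∀ c : ℝ, c * rightLineDeriv f x d ≤ rightLineDeriv f x (c • d) := by
    intro c
    rcases lt_trichotomy c 0 with hc | rfl | hc
    · have h0 := hf.rightLineDeriv_add_le x d (-d)
      rw [add_neg_cancel, rightLineDeriv_zero] at h0
      rw [show c • d = (-c) • -d by module, hf.rightLineDeriv_smul x (-d) (neg_pos.2 hc)]
      nlinarith
    · simp [rightLineDeriv_zero]
    · rw [hf.rightLineDeriv_smul x d hc]
  obtain ⟨g, hg_eq, hg_le⟩ := exists_extension_of_le_sublinear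
      (LinearPMap.mkSpanSingleton' d (rightLineDeriv f x d) hH) (rightLineDeriv f x)
      (fun c hc z => hf.rightLineDeriv_smul x z hc) (hf.rightLineDeriv_add_le x) (by
        rintro ⟨z, hz⟩
        have hz' : z ∈ Submodule.span ℝ {d} := by rwa [LinearPMap.domain_mkSpanSingleton] at hz
        obtain ⟨c, rfl⟩ := Submodule.mem_span_singleton.1 hz'
        rw [LinearPMap.mkSpanSingleton'_apply, smul_eq_mul]
        exact hNd c)
  set ξ := (InnerProductSpace.toDual ℝ (Eucl n)).symm (LinearMap.toContinuousLinearMap g)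
  have hξ : ∀ z, ⟪ξ, z⟫ = g z := by simp [ξ, InnerProductSpace.toDual_symm_apply]
  refine ⟨ξ, fun y => ?_, ?_⟩
  · have h1 := hf.rightLineDeriv_le x (y - x) one_pos
    rw [dirSlope, one_smul, div_one, add_sub_cancel] at h1
    linarith [hξ (y - x), hg_le (y - x)]
  · have hd : d ∈ (LinearPMap.mkSpanSingleton' (σ := RingHom.id ℝ) d
        (rightLineDeriv f x d) hH).domain := by
      rw [LinearPMap.domain_mkSpanSingleton]
      exact Submodule.mem_span_singleton_self d
    rw [hξ, hg_eq ⟨d, hd⟩, LinearPMap.mkSpanSingleton'_apply_self]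

lemma subdiff_nonempty (hf : ConvexOn ℝ univ f) (x : Eucl n) :
    (subdiff f x).Nonempty :=
  let ⟨ξ, hξ, _⟩ := exists_mem_subdiff_rightLineDeriv_le hf x 0
  ⟨ξ, hξ⟩

lemma subdiff_eq_iInter (f : Eucl n → ℝ) (x : Eucl n) :
    subdiff f x = ⋂ y, {ξ | ⟪y - x, ξ⟫ ≤ f y - f x} := by
  ext ξ
  simp [subdiff, le_sub_iff_add_le', real_inner_comm]

lemma convex_subdiff (f : Eucl n → ℝ) (x : Eucl n) : Convex ℝ (subdiff f x) := by
  rw [subdiff_eq_iInter]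
  exact convex_iInter fun y => convex_halfSpace_le (innerₗ (Eucl n) (y - x) |>.isLinear) _

lemma isCompact_subdiff (hf : ConvexOn ℝ univ f) (x : Eucl n) :
    IsCompact (subdiff f x) := by
  have hclosed : IsClosed (subdiff f x) := by
    rw [subdiff_eq_iInter]
    exact isClosed_iInter fun y => isClosed_le (by fun_prop) continuous_const
  obtain ⟨C, hC⟩ := (isCompact_closedBall x 1).exists_bound_of_continuousOn
    ((hf.continuousOn isOpen_univ).mono (subset_univ _))
  refine Metric.isCompact_of_isClosed_isBounded hclosed
    (Metric.isBounded_iff_subset_closedBall 0 |>.2 ⟨C + C, fun ξ hξ => ?_⟩)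
  rw [Metric.mem_closedBall, dist_zero_right]
  rcases eq_or_ne ξ 0 with rfl | hξ0
  · simpa using (norm_nonneg (f x)).trans (hC x (Metric.mem_closedBall_self zero_le_one))
  have hpos : 0 < ‖ξ‖ := norm_pos_iff.2 hξ0
  set y := x + ‖ξ‖⁻¹ • ξ
  have hy : y ∈ Metric.closedBall x 1 := by
    simp [y, dist_eq_norm, norm_smul, hpos.ne']
  have hξy : ⟪ξ, y - x⟫ = ‖ξ‖ := by
    rw [add_sub_cancel_left, real_inner_smul_right, real_inner_self_eq_norm_sq]
    field_simp
  have := hξ y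
  have := hC y hy
  have := hC x (Metric.mem_closedBall_self zero_le_one)
  rw [hξy] at *
  linarith [le_abs_self (f y), neg_abs_le (f x), Real.norm_eq_abs (f y), Real.norm_eq_abs (f x)]

end Subdifferential

section SimplexCombinations

variable {ι E : Type*} [Fintype ι] [AddCommGroup E] [Module ℝ E] {C : ι → Set E}

/-- For convex `C i` this is the convex hull of `⋃ i, C i`. -/
def simplexCombinations (C : ι → Set E) : Set E :=
  ⋃ lam ∈ stdSimplex ℝ ι, ∑ i, lam i • C i

lemma mem_simplexCombinations {z : E} :
    z ∈ simplexCombinations C ↔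
      ∃ lam ∈ stdSimplex ℝ ι, ∃ ξ : ι → E, (∀ i, ξ i ∈ C i) ∧ ∑ i, lam i • ξ i = z := by
  simp only [simplexCombinations, mem_iUnion₂, exists_prop, Set.mem_finsetSum]
  constructor
  · rintro ⟨lam, hlam, g, hg, rfl⟩
    choose ξ hξ hgξ using fun i => Set.mem_smul_set.1 (hg (Finset.mem_univ i))
    exact ⟨lam, hlam, ξ, hξ, Finset.sum_congr rfl fun i _ => hgξ i⟩
  · rintro ⟨lam, hlam, ξ, hξ, rfl⟩
    exact ⟨lam, hlam, fun i => lam i • ξ i, fun _ => smul_mem_smul_set (hξ _), rfl⟩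

lemma convex_simplexCombinations (hC : ∀ i, Convex ℝ (C i)) :
    Convex ℝ (simplexCombinations C) := by
  intro z hz z' hz' a b ha hb hab
  simp only [simplexCombinations, mem_iUnion₂, exists_prop] at hz hz' ⊢
  obtain ⟨lam, hlam, hz⟩ := hz
  obtain ⟨mu, hmu, hz'⟩ := hz'
  refine ⟨a • lam + b • mu, convex_stdSimplex ℝ ι hlam hmu ha hb hab, ?_⟩
  have hsplit : ∑ i, (a • lam + b • mu) i • C i
      = a • ∑ i, lam i • C i + b • ∑ i, mu i • C i := by
    simp only [Finset.smul_sum, smul_smul, ← Finset.sum_add_distrib, Pi.add_apply,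
      Pi.smul_apply, smul_eq_mul]
    exact Finset.sum_congr rfl fun i _ =>
      (hC i).add_smul (mul_nonneg ha (hlam.1 i)) (mul_nonneg hb (hmu.1 i))
  rw [hsplit]
  exact Set.add_mem_add (Set.smul_mem_smul_set hz) (Set.smul_mem_smul_set hz')

lemma isCompact_simplexCombinations [TopologicalSpace E] [IsTopologicalAddGroup E]
    [ContinuousSMul ℝ E] (hC : ∀ i, IsCompact (C i)) :
    IsCompact (simplexCombinations C) := by
  have himage : simplexCombinations C = (fun q : (ι → ℝ) × (ι → E) => ∑ i, q.1 i • q.2 i) ''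
      (stdSimplex ℝ ι ×ˢ univ.pi C) := by
    ext z
    simp [mem_simplexCombinations, and_assoc]
  rw [himage]
  exact ((isCompact_stdSimplex ℝ ι).prod (isCompact_univ_pi hC)).image (by fun_prop)

lemma subset_simplexCombinations [DecidableEq ι] (hC : ∀ j, (C j).Nonempty) (i : ι) :
    C i ⊆ simplexCombinations C := by
  intro ξ hξ
  choose η hη using hC
  refine mem_simplexCombinations.2
    ⟨Pi.single i 1, single_mem_stdSimplex ℝ i, Function.update η i ξ, fun j => ?_, ?_⟩
  · rcases eq_or_ne j i with rfl | hji
    · simpa using hξ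
    · simpa [hji] using hη j
  · simp [Pi.single_apply]

end SimplexCombinations

section Minimax

variable {F : Type*} [NormedAddCommGroup F] [InnerProductSpace ℝ F]

lemma isClosed_setOf_exists_inner_nonneg {K : Set F} (hK : IsCompact K) :
    IsClosed {z | ∃ k ∈ K, 0 ≤ ⟪k, z⟫} := by
  have := isCompact_iff_compactSpace.1 hK
  have hproj : {z | ∃ k ∈ K, 0 ≤ ⟪k, z⟫} = Prod.fst '' {q : F × K | 0 ≤ ⟪(q.2 : F), q.1⟫} := by
    ext z
    simp
  rw [hproj]
  exact isClosedMap_fst_of_compactSpace _ (isClosed_le continuous_const (by fun_prop))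

/-- A minimax theorem: separate `K` from the dual of the closed cone generated by `A`, and
use that this cone is its own bidual. -/
theorem exists_forall_inner_nonneg_of_forall_exists [CompleteSpace F] {K A : Set F}
    (hKconv : Convex ℝ K) (hKcomp : IsCompact K) (hA : Convex ℝ A) (hA0 : (0 : F) ∈ A)
    (h : ∀ z ∈ A, ∃ k ∈ K, 0 ≤ ⟪k, z⟫) : ∃ k ∈ K, ∀ z ∈ A, 0 ≤ ⟪z, k⟫ := by
  let C : ProperCone ℝ F :=
    Submodule.closure ((ConvexCone.hull ℝ A).toPointedCone (ConvexCone.subset_hull hA0))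
  have hCcoe : (C : Set F) = closure (ConvexCone.hull ℝ A : Set F) := rfl
  have hAC : A ⊆ C := fun z hz => hCcoe ▸ subset_closure (ConvexCone.subset_hull hz)
  have hCgood : (C : Set F) ⊆ {z | ∃ k ∈ K, 0 ≤ ⟪k, z⟫} := by
    rw [hCcoe]
    refine closure_minimal ?_ (isClosed_setOf_exists_inner_nonneg hKcomp)
    intro z hz
    obtain ⟨r, hr, y, hy, rfl⟩ := (ConvexCone.mem_hull_of_convex hA).1 hz
    obtain ⟨k, hk, hky⟩ := h y hy
    exact ⟨k, hk, by rw [real_inner_smul_right]; positivity⟩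
  by_contra! hne
  have hdisj : Disjoint K (ProperCone.innerDual (C : Set F)) := by
    refine Set.disjoint_left.2 fun k hk hkC => ?_
    obtain ⟨z, hz, hzk⟩ := hne k hk
    exact (hkC (hAC hz)).not_gt hzk
  obtain ⟨φ, hφC, hφK⟩ :=
    (ProperCone.innerDual (C : Set F)).hyperplane_separation hKconv hKcomp hdisj
  set d := (InnerProductSpace.toDual ℝ F).symm φ
  have hφ : ∀ z, ⟪z, d⟫ = φ z := fun z => by
    rw [real_inner_comm, InnerProductSpace.toDual_symm_apply]
  have hd : d ∈ C := by
    rw [← ProperCone.innerDual_innerDual C]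
    intro u hu
    rw [innerₗ_apply_apply, hφ]
    exact hφC u hu
  obtain ⟨k, hk, hkd⟩ := hCgood hd
  rw [hφ] at hkd
  exact (hφK k hk).not_ge hkd

end Minimax

section Isolation

variable {n p : ℕ} {f : Fin p → Eucl n → ℝ} {S : Set (Eucl n)} {xh : Eucl n} {ν : ℝ}

lemma exists_le_of_le_sum_mul {ι : Type*} [Fintype ι] {lam a : ι → ℝ} {c : ℝ}
    (hlam : lam ∈ stdSimplex ℝ ι) (h : c ≤ ∑ i, lam i * a i) : ∃ i, c ≤ a i := by
  obtain ⟨j, -, -⟩ := Finset.exists_ne_zero_of_sum_ne_zero (hlam.2.symm ▸ one_ne_zero)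
  have : Nonempty ι := ⟨j⟩
  obtain ⟨i, hi⟩ := Finite.exists_max a
  refine ⟨i, h.trans ?_⟩
  calc ∑ j, lam j * a j ≤ ∑ j, lam j * a i :=
        Finset.sum_le_sum fun j _ => mul_le_mul_of_nonneg_left (hi j) (hlam.1 j)
    _ = a i := by rw [← Finset.sum_mul, hlam.2, one_mul]

lemma simplex_sum_mul_inner_sub {lam : Fin p → ℝ} (hlam : simplex lam) (ξ : Fin p → Eucl n)
    (w v : Eucl n) : ∑ i, lam i * ⟪ξ i - w, v⟫ = ⟪∑ i, lam i • ξ i - w, v⟫ := by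
  simp only [inner_sub_left, mul_sub, Finset.sum_sub_distrib, ← Finset.sum_mul, hlam.2, one_mul,
    sum_inner, real_inner_smul_left]

lemma gapFn_eq_zero_iff {x : Eucl n} (hx : x ∈ S) (ξ : Fin p → Eucl n) (lam : Fin p → ℝ) :
    gapFn S x ξ lam = 0 ↔ ∀ y ∈ S, ∑ i, lam i * ⟪ξ i, x - y⟫ ≤ 0 := by
  have hle : ∀ y ∈ S, ((∑ i, lam i * ⟪ξ i, x - y⟫ : ℝ) : EReal) ≤ gapFn S x ξ lam :=
    fun y hy => le_iSup₂ (f := fun y (_ : y ∈ S) => ((∑ i, lam i * ⟪ξ i, x - y⟫ : ℝ) : EReal)) y hy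
  constructor
  · intro h y hy
    exact EReal.coe_nonpos.1 (h ▸ hle y hy)
  · intro h
    refine le_antisymm (iSup₂_le fun y hy => EReal.coe_nonpos.2 (h y hy)) ?_
    simpa using hle x hx

lemma convex_feasSet {T : Type*} {g : T → Eucl n → EReal} (hg : ∀ t, ConvexE (g t)) :
    Convex ℝ (feasSet g) := by
  intro x hx y hy a b ha hb hab t
  exact (hg t x y a b ha hb hab).trans (add_nonpos
    (mul_nonpos_of_nonneg_of_nonpos (EReal.coe_nonneg.2 ha) (hx t))
    (mul_nonpos_of_nonneg_of_nonpos (EReal.coe_nonneg.2 hb) (hy t)))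

/-- The slopes decrease as `τ ↓ 0`, so a single index serves all small `τ` at once. -/
lemma IsolatedEff.exists_le_rightLineDeriv (hf : ∀ i, ConvexOn ℝ univ (f i)) (hS : Convex ℝ S)
    (hxS : xh ∈ S) (hiso : IsolatedEff f S xh ν) {y : Eucl n} (hy : y ∈ S) :
    ∃ i, ν * ‖y - xh‖ ≤ rightLineDeriv (f i) xh (y - xh) := by
  have : Nonempty (Fin p) := let ⟨i, _⟩ := hiso xh hxS; ⟨i⟩
  by_contra! hlt
  choose τ hτ using fun i => exists_lt_of_ciInf_lt (hlt i)
  obtain ⟨j, hj⟩ := Finite.exists_min fun i => (τ i : ℝ)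
  set t := min 1 (τ j : ℝ)
  have ht : 0 < t := lt_min one_pos (τ j).2
  obtain ⟨i, hi⟩ := hiso _ (hS.add_smul_sub_mem hxS hy ⟨ht.le, min_le_left _ _⟩)
  rw [add_sub_cancel_left, norm_smul, Real.norm_of_nonneg ht.le] at hi
  have hslope : ν * ‖y - xh‖ ≤ dirSlope (f i) xh (y - xh) t := by
    rw [dirSlope, le_div_iff₀ ht]
    linarith
  linarith [hτ i, (hf i).dirSlope_mono xh (y - xh) ht ((min_le_right _ _).trans (hj i))]

theorem IsolatedEff.exists_gap_nonpos (hf : ∀ i, ConvexOn ℝ univ (f i)) (hS : Convex ℝ S)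
    (hxS : xh ∈ S) (hiso : IsolatedEff f S xh ν) {w : Eucl n} (hw : ‖w‖ ≤ ν) :
    ∃ (ξ : Fin p → Eucl n) (lam : Fin p → ℝ), (∀ i, ξ i ∈ subdiff (f i) xh) ∧ simplex lam ∧
      ∀ y ∈ S, ∑ i, lam i * ⟪ξ i - w, xh - y⟫ ≤ 0 := by
  set D := simplexCombinations fun i => subdiff (f i) xh
  have hD : ∀ y ∈ S, ∃ ξ ∈ D, ν * ‖y - xh‖ ≤ ⟪ξ, y - xh⟫ := by
    intro y hy
    obtain ⟨i, hi⟩ := hiso.exists_le_rightLineDeriv hf hS hxS hy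
    obtain ⟨ξ, hξ, hξd⟩ := exists_mem_subdiff_rightLineDeriv_le (hf i) xh (y - xh)
    exact ⟨ξ, subset_simplexCombinations (fun j => subdiff_nonempty (hf j) xh) i hξ, hi.trans hξd⟩
  obtain ⟨_, ⟨ξbar, hξbar, rfl⟩, hgap⟩ := exists_forall_inner_nonneg_of_forall_exists
    (K := (-w + ·) '' D) (A := (-xh + ·) '' S)
    ((convex_simplexCombinations fun i => convex_subdiff (f i) xh).translate (-w))
    ((isCompact_simplexCombinations fun i => isCompact_subdiff (hf i) xh).image (by fun_prop))
    (hS.translate (-xh)) ⟨xh, hxS, neg_add_cancel xh⟩ (by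
      rintro _ ⟨y, hy, rfl⟩
      obtain ⟨ξ, hξD, hξ⟩ := hD y hy
      refine ⟨-w + ξ, mem_image_of_mem _ hξD, ?_⟩
      simp only [neg_add_eq_sub, inner_sub_left]
      nlinarith [real_inner_le_norm w (y - xh), norm_nonneg (y - xh)])
  obtain ⟨lam, hlam, ξ, hξ, rfl⟩ := mem_simplexCombinations.1 hξbar
  refine ⟨ξ, lam, hξ, hlam, fun y hy => ?_⟩
  have := hgap _ (mem_image_of_mem _ hy)
  rw [simplex_sum_mul_inner_sub hlam, ← neg_sub y xh, inner_neg_right, neg_nonpos,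
    real_inner_comm]
  simpa only [neg_add_eq_sub] using this

lemma isolatedEff_of_forall_gap_nonpos (hν : 0 ≤ ν)
    (H : ∀ w : Eucl n, ‖w‖ ≤ ν → ∃ (ξ : Fin p → Eucl n) (lam : Fin p → ℝ),
      (∀ i, ξ i ∈ subdiff (f i) xh) ∧ simplex lam ∧
        ∀ y ∈ S, ∑ i, lam i * ⟪ξ i - w, xh - y⟫ ≤ 0) :
    IsolatedEff f S xh ν := by
  intro x hx
  -- at `x = xh` the junk value `ν / 0 = 0` gives `w = 0`, and both sides below vanish
  set w := (ν / ‖x - xh‖) • (x - xh)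
  have hw : ‖w‖ ≤ ν := by
    rcases eq_or_ne ‖x - xh‖ 0 with h | h
    · simp [w, h, hν]
    · rw [norm_smul, Real.norm_of_nonneg (by positivity), div_mul_cancel₀ _ h]
  have hwx : ⟪w, x - xh⟫ = ν * ‖x - xh‖ := by
    rw [real_inner_smul_left, real_inner_self_eq_norm_sq]
    rcases eq_or_ne ‖x - xh‖ 0 with h | h
    · simp [h]
    · field_simp
  obtain ⟨ξ, lam, hξ, hlam, hgap⟩ := H w hw
  have hx' := hgap x hx
  rw [simplex_sum_mul_inner_sub hlam, ← neg_sub x xh, inner_neg_right, neg_nonpos,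
    inner_sub_left, sum_inner] at hx'
  refine exists_le_of_le_sum_mul hlam ?_
  calc ν * ‖x - xh‖ = ⟪w, x - xh⟫ := hwx.symm
    _ ≤ ∑ i, ⟪lam i • ξ i, x - xh⟫ := by linarith
    _ ≤ ∑ i, lam i * (f i x - f i xh) := Finset.sum_le_sum fun i _ => by
      rw [real_inner_smul_left]
      exact mul_le_mul_of_nonneg_left (by linarith [hξ i x]) (hlam.1 i)

end Isolation

variable {n p : ℕ} {T : Type*}

theorem stmt14_general
    (f : Fin p → Eucl n → ℝ) (g : T → Eucl n → EReal)
    (hf : ∀ i, ConvexOn ℝ Set.univ (f i))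
    (hgconv : ∀ t, ConvexE (g t))
    (xh : Eucl n) (hxS : xh ∈ feasSet g) :
    (∃ ν : ℝ, 0 < ν ∧ IsolatedEff f (feasSet g) xh ν) ↔
      (∃ ν : ℝ, 0 < ν ∧ ∀ w : Eucl n, ‖w‖ ≤ ν →
        ∃ (ξ : Fin p → Eucl n) (lam : Fin p → ℝ),
          (∀ i, ξ i ∈ subdiff (f i) xh) ∧ simplex lam ∧
          gapFn (feasSet g) xh (fun i => ξ i - w) lam = 0) := by
  have hS := convex_feasSet hgconv
  simp only [gapFn_eq_zero_iff hxS]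
  exact ⟨fun ⟨ν, hν, hiso⟩ => ⟨ν, hν, fun w hw => hiso.exists_gap_nonpos hf hS hxS hw⟩,
    fun ⟨ν, hν, H⟩ => ⟨ν, hν, isolatedEff_of_forall_gap_nonpos hν.le H⟩⟩

/-- Suppose `(P)` is continuous, all constraints are continuously
differentiable around `x̂ ∈ S`, and MFCQ holds at `x̂`. Then `x̂` is an isolated efficient
solution of `(P)` iff there is `ν > 0` such that for all `w` with `‖w‖ ≤ ν` there are
`ξ_i ∈ ∂f_i(x̂)` and `λ` in the unit simplex with `ϑ(x̂, ξ − w, λ) = 0`. -/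
theorem stmt14
    [TopologicalSpace T] [CompactSpace T] [T2Space T]
    (hn : 1 ≤ n) (hp : 1 ≤ p)
    (f : Fin p → Eucl n → ℝ) (g : T → Eucl n → EReal)
    (hf : ∀ i, ConvexOn ℝ Set.univ (f i))
    (hgconv : ∀ t, ConvexE (g t))
    (hgproper : ∀ t, ProperE (g t))
    (hglsc : ∀ t, LowerSemicontinuous (g t))
    (xh : Eucl n) (hxS : xh ∈ feasSet g)
    (gR : T → Eucl n → ℝ) (hgR : ∀ t x, g t x = ((gR t x : ℝ) : EReal))
    (hcont : Continuous fun q : T × Eucl n => gR q.1 q.2)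
    (hsmooth : ∀ t, ∃ U ∈ 𝓝 xh, ContDiffOn ℝ 1 (gR t) U)
    (hmfcq : MFCQ g xh) :
    (∃ ν : ℝ, 0 < ν ∧ IsolatedEff f (feasSet g) xh ν) ↔
      (∃ ν : ℝ, 0 < ν ∧ ∀ w : Eucl n, ‖w‖ ≤ ν →
        ∃ (ξ : Fin p → Eucl n) (lam : Fin p → ℝ),
          (∀ i, ξ i ∈ subdiff (f i) xh) ∧ simplex lam ∧
          gapFn (feasSet g) xh (fun i => ξ i - w) lam = 0) :=
  stmt14_general f g hf hgconv xh hxS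

end MOSIP
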